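/- Let (ρ_K, v₁,K, v₂,K, p_K), K ∈ {L,R}, be two 2D primitive states with ρ_K > 0, p_K > 0, v₁,K² + v₂,K² < 1, and suppose ρ_L ≠ ρ_R and ρ_L/p_L ≠ ρ_R/p_R. Set γ_K = 1/√(1−v₁,K²−v₂,K²) and the parameter variables z₁ = ρ, z₂ = ρ/p, z₃ = γv₁, z₄ = γv₂. Let h_K, S_K be arbitrary reals (in the application h_K = 1+e(θ_K)+θ_K, S_K = −ln ρ_K + σ(θ_K) with θ_K = p_K/ρ_K). Define W_K = (z₂,K h_K − S_K, z₃,K z₂,K, z₄,K z₂,K, −z₂,K γ_K) ∈ ℝ⁴, ψ₁,K = z₁,K z₃,K, ψ₂,K = z₁,K z₄,K. With [a] = a_R−a_L, {{a}} = (a_L+a_R)/2, {{a}}_ln = [a]/[ln a], define E = ([W₁]−[ln z₁])/[z₂], ρĥ = ({{z₁}}/{{z₂}} + {{z₁}}_ln·E)/({{γ}}² − {{z₃}}² − {{z₄}}²), and the fluxes F̃₁ = ({{z₁}}_ln{{z₃}}, ρĥ{{z₃}}² + {{z₁}}/{{z₂}}, ρĥ{{z₃}}{{z₄}}, ρĥ{{γ}}{{z₃}}),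 F̃₂ = ({{z₁}}_ln{{z₄}}, ρĥ{{z₃}}{{z₄}}, ρĥ{{z₄}}² + {{z₁}}/{{z₂}}, ρĥ{{γ}}{{z₄}}). Then {{γ}}² − {{z₃}}² − {{z₄}}² > 0 and (W_R−W_L)·F̃₁ = [ψ₁] and (W_R−W_L)·F̃₂ = [ψ₂]; i.e., F̃₁ and F̃₂ are two-point entropy conservative fluxes for 2D relativistic hydrodynamics. -/
import Mathlib


open Matrix

/-- The unified two-point entropy conservative numerical fluxes for 2D RHD with
general Synge-type EOS: with parameter variables `z₁ = ρ`, `z₂ = ρ/p`, `z₃ = γv₁`,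
`z₄ = γv₂`, entropy variables `W = (z₂h − S, z₃z₂, z₄z₂, −z₂γ)` and entropy
potentials `ψ₁ = z₁z₃`, `ψ₂ = z₁z₄`, the fluxes `F̃₁`, `F̃₂` satisfy
`{{γ}}² − {{z₃}}² − {{z₄}}² > 0`, `(W_R − W_L)·F̃₁ = [ψ₁]`, and `(W_R − W_L)·F̃₂ = [ψ₂]`. -/
theorem stmt15 (ρL pL v1L v2L ρR pR v1R v2R hL hR SL SR : ℝ)
    (hρL : 0 < ρL) (hpL : 0 < pL) (hvL : v1L ^ 2 + v2L ^ 2 < 1)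
    (hρR : 0 < ρR) (hpR : 0 < pR) (hvR : v1R ^ 2 + v2R ^ 2 < 1)
    (hne1 : ρL ≠ ρR) (hne2 : ρL / pL ≠ ρR / pR) :
    let γL : ℝ := 1 / Real.sqrt (1 - v1L ^ 2 - v2L ^ 2)
    let γR : ℝ := 1 / Real.sqrt (1 - v1R ^ 2 - v2R ^ 2)
    let z1L : ℝ := ρL
    let z1R : ℝ := ρR
    let z2L : ℝ := ρL / pL
    let z2R : ℝ := ρR / pR
    let z3L : ℝ := γL * v1L
    let z3R : ℝ := γR * v1R
    let z4L : ℝ := γL * v2L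
    let z4R : ℝ := γR * v2R
    let WL : Fin 4 → ℝ := ![z2L * hL - SL, z3L * z2L, z4L * z2L, -(z2L * γL)]
    let WR : Fin 4 → ℝ := ![z2R * hR - SR, z3R * z2R, z4R * z2R, -(z2R * γR)]
    let ψ1L : ℝ := z1L * z3L
    let ψ1R : ℝ := z1R * z3R
    let ψ2L : ℝ := z1L * z4L
    let ψ2R : ℝ := z1R * z4R
    let az1 : ℝ := (z1L + z1R) / 2
    let az2 : ℝ := (z2L + z2R) / 2
    let az3 : ℝ := (z3L + z3R) / 2
    let az4 : ℝ := (z4L + z4R) / 2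
    let aγ : ℝ := (γL + γR) / 2
    let lz1 : ℝ := (z1R - z1L) / (Real.log z1R - Real.log z1L)
    let E : ℝ := ((z2R * hR - SR) - (z2L * hL - SL) - (Real.log z1R - Real.log z1L))
      / (z2R - z2L)
    let ρh : ℝ := (az1 / az2 + lz1 * E) / (aγ ^ 2 - az3 ^ 2 - az4 ^ 2)
    let F1 : Fin 4 → ℝ :=
      ![lz1 * az3, ρh * az3 ^ 2 + az1 / az2, ρh * az3 * az4, ρh * aγ * az3]
    let F2 : Fin 4 → ℝ :=
      ![lz1 * az4, ρh * az3 * az4, ρh * az4 ^ 2 + az1 / az2, ρh * aγ * az4]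
    0 < aγ ^ 2 - az3 ^ 2 - az4 ^ 2 ∧
      (WR - WL) ⬝ᵥ F1 = ψ1R - ψ1L ∧
      (WR - WL) ⬝ᵥ F2 = ψ2R - ψ2L := by
  intro γL γR z1L z1R z2L z2R z3L z3R z4L z4R WL WR ψ1L ψ1R ψ2L ψ2R az1 az2 az3 az4 aγ lz1 E ρh F1 F2
  have hsL : 0 < 1 - v1L ^ 2 - v2L ^ 2 := by linarith
  have hsR : 0 < 1 - v1R ^ 2 - v2R ^ 2 := by linarith
  have hγLpos : 0 < γL := by
    have : 0 < Real.sqrt (1 - v1L ^ 2 - v2L ^ 2) := Real.sqrt_pos.mpr hsL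
    exact div_pos one_pos this
  have hγRpos : 0 < γR := by
    have : 0 < Real.sqrt (1 - v1R ^ 2 - v2R ^ 2) := Real.sqrt_pos.mpr hsR
    exact div_pos one_pos this
  have hγL2 : γL ^ 2 * (1 - v1L ^ 2 - v2L ^ 2) = 1 := by
    show (1 / Real.sqrt (1 - v1L ^ 2 - v2L ^ 2)) ^ 2 * (1 - v1L ^ 2 - v2L ^ 2) = 1
    rw [div_pow, one_pow, Real.sq_sqrt hsL.le]
    field_simp
  have hγR2 : γR ^ 2 * (1 - v1R ^ 2 - v2R ^ 2) = 1 := by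
    show (1 / Real.sqrt (1 - v1R ^ 2 - v2R ^ 2)) ^ 2 * (1 - v1R ^ 2 - v2R ^ 2) = 1
    rw [div_pow, one_pow, Real.sq_sqrt hsR.le]
    field_simp
  have hgL : γL ^ 2 = 1 + z3L ^ 2 + z4L ^ 2 := by
    show γL ^ 2 = 1 + (γL * v1L) ^ 2 + (γL * v2L) ^ 2
    linear_combination hγL2
  have hgR : γR ^ 2 = 1 + z3R ^ 2 + z4R ^ 2 := by
    show γR ^ 2 = 1 + (γR * v1R) ^ 2 + (γR * v2R) ^ 2
    linear_combination hγR2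
  -- positivity of the denominator
  have hc : z3L * z3R + z4L * z4R < γL * γR := by
    nlinarith [sq_nonneg (z3L * z4R - z4L * z3R), mul_pos hγLpos hγRpos,
      sq_nonneg (z3L * z3R + z4L * z4R), sq_nonneg (γL * γR - z3L * z3R - z4L * z4R),
      sq_nonneg (z3L - z3R), sq_nonneg (z4L - z4R)]
  have hD : 0 < aγ ^ 2 - az3 ^ 2 - az4 ^ 2 := by
    show 0 < ((γL + γR) / 2) ^ 2 - ((z3L + z3R) / 2) ^ 2 - ((z4L + z4R) / 2) ^ 2
    nlinarith [hgL, hgR, hc]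
  -- nonzero denominators
  have h2 : z2R - z2L ≠ 0 := sub_ne_zero.mpr (Ne.symm hne2)
  have hz2L : 0 < z2L := div_pos hρL hpL
  have hz2R : 0 < z2R := div_pos hρR hpR
  have ha2 : az2 ≠ 0 := by
    show (z2L + z2R) / 2 ≠ 0
    positivity
  have hLne : Real.log z1R - Real.log z1L ≠ 0 := by
    refine sub_ne_zero.mpr fun h => hne1 ?_
    have := Real.log_injOn_pos (Set.mem_Ioi.mpr hρR) (Set.mem_Ioi.mpr hρL) h
    exact this.symm
  -- key algebraic relations
  have hlz1 : lz1 * (Real.log z1R - Real.log z1L) = z1R - z1L :=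
    div_mul_cancel₀ _ hLne
  have hE : E * (z2R - z2L) =
      (z2R * hR - SR) - (z2L * hL - SL) - (Real.log z1R - Real.log z1L) :=
    div_mul_cancel₀ _ h2
  have hρh : ρh * (aγ ^ 2 - az3 ^ 2 - az4 ^ 2) = az1 / az2 + lz1 * E :=
    div_mul_cancel₀ _ hD.ne'
  have hQ : (az1 / az2) * az2 = az1 := div_mul_cancel₀ _ ha2
  have haz1 : az1 = (z1L + z1R) / 2 := rfl
  have haz2 : az2 = (z2L + z2R) / 2 := rfl
  have haz3 : az3 = (z3L + z3R) / 2 := rfl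
  have haz4 : az4 = (z4L + z4R) / 2 := rfl
  have haγ : aγ = (γL + γR) / 2 := rfl
  refine ⟨hD, ?_, ?_⟩
  · show (WR - WL) ⬝ᵥ F1 = z1R * z3R - z1L * z3L
    have hW : WR - WL = ![(z2R * hR - SR) - (z2L * hL - SL), z3R * z2R - z3L * z2L,
        z4R * z2R - z4L * z2L, -(z2R * γR) - -(z2L * γL)] := by
      show (![z2R * hR - SR, z3R * z2R, z4R * z2R, -(z2R * γR)] : Fin 4 → ℝ)
          - ![z2L * hL - SL, z3L * z2L, z4L * z2L, -(z2L * γL)] = _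
      funext i
      fin_cases i <;> simp
    have hF : F1 = ![lz1 * az3, ρh * az3 ^ 2 + az1 / az2, ρh * az3 * az4,
        ρh * aγ * az3] := rfl
    rw [hW, hF]
    simp only [dotProduct, Fin.sum_univ_four, Matrix.cons_val_zero,
      Matrix.cons_val_one, Matrix.head_cons, Matrix.cons_val_two, Matrix.tail_cons,
      Matrix.cons_val_three]
    rw [haz3, haz4, haγ] at hρh ⊢
    rw [haz1, haz2] at hρh hQ ⊢
    linear_combination ((z3L + z3R) / 2) * hlz1 - ((z3L + z3R) / 2) * lz1 * hE
      + (z3R - z3L) * hQ - ((z3L + z3R) / 2) * (z2R - z2L) * hρh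
      + ((z3L + z3R) / 2) * ρh * ((z2L + z2R) / 4) * hgL
      - ((z3L + z3R) / 2) * ρh * ((z2L + z2R) / 4) * hgR
  · show (WR - WL) ⬝ᵥ F2 = z1R * z4R - z1L * z4L
    have hW : WR - WL = ![(z2R * hR - SR) - (z2L * hL - SL), z3R * z2R - z3L * z2L,
        z4R * z2R - z4L * z2L, -(z2R * γR) - -(z2L * γL)] := by
      show (![z2R * hR - SR, z3R * z2R, z4R * z2R, -(z2R * γR)] : Fin 4 → ℝ)
          - ![z2L * hL - SL, z3L * z2L, z4L * z2L, -(z2L * γL)] = _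
      funext i
      fin_cases i <;> simp
    have hF : F2 = ![lz1 * az4, ρh * az3 * az4, ρh * az4 ^ 2 + az1 / az2,
        ρh * aγ * az4] := rfl
    rw [hW, hF]
    simp only [dotProduct, Fin.sum_univ_four, Matrix.cons_val_zero,
      Matrix.cons_val_one, Matrix.head_cons, Matrix.cons_val_two, Matrix.tail_cons,
      Matrix.cons_val_three]
    rw [haz3, haz4, haγ] at hρh ⊢
    rw [haz1, haz2] at hρh hQ ⊢
    linear_combination ((z4L + z4R) / 2) * hlz1 - ((z4L + z4R) / 2) * lz1 * hE
      + (z4R - z4L) * hQ - ((z4L + z4R) / 2) * (z2R - z2L) * hρh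
      + ((z4L + z4R) / 2) * ρh * ((z2L + z2R) / 4) * hgL
      - ((z4L + z4R) / 2) * ρh * ((z2L + z2R) / 4) * hgR
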